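/- arXiv:2111.14746 — 2 statements merged into one kernel-verified Lean document; each statement's English description precedes it below -/
import Mathlib

section
/- (Lemma 2, Blackwell's principle of irrelevant information.) Let 𝖴, 𝖹, 𝖵 be finite nonempty types, let (U, Z) be a jointly distributed pair with values in 𝖴 × 𝖹 (given by a PMF on 𝖴 × 𝖹), and let f : 𝖴 × 𝖵 → ℝ be any function. Then the minimum over all functions g : 𝖴 × 𝖹 → 𝖵 of E[f(U, g(U, Z))] equals the minimum over all functions g : 𝖴 → 𝖵 of E[f(U, g(U))]. -/
noncomputable section

/-- Expectation of a real-valued function under a probability mass function on a finite type. -/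
def pexp {α : Type*} [Fintype α] (p : PMF α) (f : α → ℝ) : ℝ :=
  ∑ a, (p a).toReal * f a

/-- A (history-dependent) estimation strategy: the round-`i` estimator maps the current
observation `Xᵢ`, the past observations `X^{i-1}` and the past revealed quantities `Y^{i-1}`
(together forming `(X^i, Y^{i-1})`) to an estimate `Ŷᵢ`. -/
abbrev Strategy (𝓧 𝓨 𝓨h : Type*) : Type _ := ℕ → 𝓧 → List 𝓧 → List 𝓨 → 𝓨h

/-- The strategy induced by a sequence of Markov estimators `ψᵢ : 𝓧 → 𝓨h`. -/
def markovStrategy {𝓧 𝓨 𝓨h : Type*} (ψ : ℕ → 𝓧 → 𝓨h) : Strategy 𝓧 𝓨 𝓨h :=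
  fun i x _ _ => ψ i x

/-- Replace the round-`n` estimator of a strategy by another one. -/
def replaceRound {𝓧 𝓨 𝓨h : Type*} (ψ : Strategy 𝓧 𝓨 𝓨h) (n : ℕ)
    (ψn : Strategy 𝓧 𝓨 𝓨h) : Strategy 𝓧 𝓨 𝓨h :=
  fun i x hx hy => if i = n then ψn i x hx hy else ψ i x hx hy

/-- The observation-estimate loss `ℓ̄ᵢ(x, yh) = E_{Y ∼ νᵢ(x)}[ℓ(x, Y, yh)]`. -/
def lbar {𝓧 𝓨 𝓨h : Type*} [Fintype 𝓨] (ν : ℕ → 𝓧 → PMF 𝓨)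
    (ℓ : 𝓧 → 𝓨 → 𝓨h → ℝ) (i : ℕ) (x : 𝓧) (yh : 𝓨h) : ℝ :=
  pexp (ν i x) fun y => ℓ x y yh

/-- `lossFrom κ ν L ψ i m x hx hy` : expected accumulated loss over `m` rounds (rounds
`i, i+1, …, i+m-1`), starting at round `i` with current observation `x`, past observation
history `hx` and past quantity history `hy`, under the (possibly round-dependent) contextual
loss `L` and the strategy `ψ`.  The process evolves as `Yᵢ ∼ νᵢ(Xᵢ)` (conditionally
independent of everything else given `Xᵢ`), `Ŷᵢ = ψᵢ(X^i, Y^{i-1})`,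
`X_{i+1} ∼ κ_{i+1}(Xᵢ, Ŷᵢ)`. -/
def lossFrom {𝓧 𝓨 𝓨h : Type*} [Fintype 𝓧] [Fintype 𝓨]
    (κ : ℕ → 𝓧 → 𝓨h → PMF 𝓧) (ν : ℕ → 𝓧 → PMF 𝓨)
    (L : ℕ → 𝓧 → 𝓨 → 𝓨h → ℝ) (ψ : Strategy 𝓧 𝓨 𝓨h) :
    ℕ → ℕ → 𝓧 → List 𝓧 → List 𝓨 → ℝ
  | _, 0, _, _, _ => 0
  | i, m + 1, x, hx, hy =>
      pexp (ν i x) fun y =>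
        L i x y (ψ i x hx hy) +
          pexp (κ (i + 1) x (ψ i x hx hy)) fun x' =>
            lossFrom κ ν L ψ (i + 1) m x' (hx ++ [x]) (hy ++ [y])

/-- The inference loss `J(ψ) = E[∑_{i=1}^n ℓ(Xᵢ, Yᵢ, Ŷᵢ)]` of strategy `ψ` for the
`n`-round dynamic inference problem with initial distribution `P₁`. -/
def J {𝓧 𝓨 𝓨h : Type*} [Fintype 𝓧] [Fintype 𝓨] (P₁ : PMF 𝓧)
    (κ : ℕ → 𝓧 → 𝓨h → PMF 𝓧) (ν : ℕ → 𝓧 → PMF 𝓨)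
    (ℓ : 𝓧 → 𝓨 → 𝓨h → ℝ) (n : ℕ) (ψ : Strategy 𝓧 𝓨 𝓨h) : ℝ :=
  pexp P₁ fun x => lossFrom κ ν (fun _ => ℓ) ψ 1 n x [] []

/-- `Eat κ ν g ψ i s x hx hy` : the expectation `E[g(X_{i+s}, Y_{i+s}, Ŷ_{i+s})]` of a
single-round quantity at round `i + s`, for the process started at round `i` with current
observation `x` and histories `hx`, `hy`, run under the strategy `ψ`. -/
def Eat {𝓧 𝓨 𝓨h : Type*} [Fintype 𝓧] [Fintype 𝓨]
    (κ : ℕ → 𝓧 → 𝓨h → PMF 𝓧) (ν : ℕ → 𝓧 → PMF 𝓨)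
    (g : 𝓧 → 𝓨 → 𝓨h → ℝ) (ψ : Strategy 𝓧 𝓨 𝓨h) :
    ℕ → ℕ → 𝓧 → List 𝓧 → List 𝓨 → ℝ
  | i, 0, x, hx, hy => pexp (ν i x) fun y => g x y (ψ i x hx hy)
  | i, s + 1, x, hx, hy =>
      pexp (ν i x) fun y =>
        pexp (κ (i + 1) x (ψ i x hx hy)) fun x' =>
          Eat κ ν g ψ (i + 1) s x' (hx ++ [x]) (hy ++ [y])

/-- The dynamic-programming value function: `Vstar κ ν ℓ i m x` is `V*ᵢ(x)` when exactly `m`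
rounds follow round `i` (so round `i` is the last round iff `m = 0`):
`V*ᵢ(x) = min_{yh} Q*ᵢ(x, yh)`, with `Q*` as in `Qstar`. -/
def Vstar {𝓧 𝓨 𝓨h : Type*} [Fintype 𝓧] [Fintype 𝓨]
    (κ : ℕ → 𝓧 → 𝓨h → PMF 𝓧) (ν : ℕ → 𝓧 → PMF 𝓨)
    (ℓ : 𝓧 → 𝓨 → 𝓨h → ℝ) : ℕ → ℕ → 𝓧 → ℝ
  | i, 0, x => ⨅ yh, lbar ν ℓ i x yh
  | i, m + 1, x =>
      ⨅ yh, (lbar ν ℓ i x yh + pexp (κ (i + 1) x yh) fun x' => Vstar κ ν ℓ (i + 1) m x')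

/-- The dynamic-programming Q-function: `Qstar κ ν ℓ i m x yh` is `Q*ᵢ(x, yh)` when exactly `m`
rounds follow round `i`: `Q*ₙ(x,yh) = ℓ̄ₙ(x,yh)` in the last round, and otherwise
`Q*ᵢ(x,yh) = ℓ̄ᵢ(x,yh) + E_{x' ∼ κ_{i+1}(x,yh)}[V*_{i+1}(x')]`. -/
def Qstar {𝓧 𝓨 𝓨h : Type*} [Fintype 𝓧] [Fintype 𝓨]
    (κ : ℕ → 𝓧 → 𝓨h → PMF 𝓧) (ν : ℕ → 𝓧 → PMF 𝓨)
    (ℓ : 𝓧 → 𝓨 → 𝓨h → ℝ) : ℕ → ℕ → 𝓧 → 𝓨h → ℝ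
  | i, 0, x, yh => lbar ν ℓ i x yh
  | i, m + 1, x, yh =>
      lbar ν ℓ i x yh + pexp (κ (i + 1) x yh) fun x' => Vstar κ ν ℓ (i + 1) m x'

/-- **Lemma 2, Blackwell's principle of irrelevant information.**
For finite nonempty `U`, `Z`, `V`, a jointly distributed pair `(U, Z)` given by a PMF `p` on
`U × Z`, and any `f : U × V → ℝ`, the minimum over `g : U × Z → V` of `E[f(U, g(U, Z))]`
equals the minimum over `g : U → V` of `E[f(U, g(U))]`. -/
theorem blackwell_irrelevant_information {U Z V : Type*} [Fintype U] [Nonempty U]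
    [Fintype Z] [Nonempty Z] [Fintype V] [Nonempty V]
    (p : PMF (U × Z)) (f : U × V → ℝ) :
    (⨅ g : U × Z → V, pexp p fun uz => f (uz.1, g uz)) =
      ⨅ g : U → V, pexp p fun uz => f (uz.1, g uz.1) := by
  have pexp_mono : ∀ (h₁ h₂ : U × Z → ℝ), (∀ a, h₁ a ≤ h₂ a) → pexp p h₁ ≤ pexp p h₂ := by
    intro h₁ h₂ hle
    apply Finset.sum_le_sum
    intro a _
    exact mul_le_mul_of_nonneg_left (hle a) ENNReal.toReal_nonneg
  have hbdd1 : BddBelow (Set.range fun g : U × Z → V => pexp p fun uz => f (uz.1, g uz)) :=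
    (Set.finite_range _).bddBelow
  have hbdd2 : BddBelow (Set.range fun g : U → V => pexp p fun uz => f (uz.1, g uz.1)) :=
    (Set.finite_range _).bddBelow
  apply le_antisymm
  · apply le_ciInf
    intro g
    exact ciInf_le hbdd1 (fun uz => g uz.1)
  · apply le_ciInf
    intro g
    have hmin : ∀ u : U, ∃ v : V, ∀ v' : V, f (u, v) ≤ f (u, v') := by
      intro u
      obtain ⟨v, _, hv⟩ := Finset.exists_min_image Finset.univ (fun v => f (u, v))
        ⟨Classical.arbitrary V, Finset.mem_univ _⟩
      exact ⟨v, fun v' => hv v' (Finset.mem_univ _)⟩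
    choose gstar hgstar using hmin
    calc (⨅ g : U → V, pexp p fun uz => f (uz.1, g uz.1))
        ≤ pexp p fun uz => f (uz.1, gstar uz.1) := ciInf_le hbdd2 gstar
      _ ≤ pexp p fun uz => f (uz.1, g uz) :=
          pexp_mono _ _ fun uz => hgstar uz.1 (g uz)

end
end

section
/- (Lemma 4, (i−1)th-round lemma.) Fix i ≥ 2 and consider an i-round dynamic inference model. Given any estimation strategy (ψ₁,…,ψ_{i−1}, ψ̄ᵢ) whose last estimator ψ̄ᵢ : 𝒳 → 𝒴̂ is Markov, there exists a Markov estimator ψ̄_{i−1} : 𝒳 → 𝒴̂ for the (i−1)th round such that J(ψ₁,…,ψ_{i−2}, ψ̄_{i−1}, ψ̄ᵢ) ≤ J(ψ₁,…,ψ_{i−1}, ψ̄ᵢ), where J denotes the inference loss of the i-round problem. -/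
/-! With the last-round estimator Markov, the loss of the last two rounds from round `i - 1` on,
given the history, is `Q(xᵢ₋₁, ŷᵢ₋₁)` where
`Q(x, yh) = ℓ̄ᵢ₋₁(x, yh) + E_{x' ∼ κᵢ(x, yh)}[ℓ̄ᵢ(x', ψ̄ᵢ(x'))]` depends on the history only through
the current observation. Choosing `ψ̄ᵢ₋₁(x)` to minimise `Q(x, ·)` therefore lowers this
conditional loss for every history, and since the earlier rounds are untouched the inequality
survives the expectations over rounds `1, …, i - 2`. -/

noncomputable section

section Pexp

variable {α : Type*} [Fintype α]

lemma pexp_mono (p : PMF α) {f g : α → ℝ} (h : ∀ a, f a ≤ g a) : pexp p f ≤ pexp p g :=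
  Finset.sum_le_sum fun a _ => mul_le_mul_of_nonneg_left (h a) ENNReal.toReal_nonneg

lemma PMF.sum_toReal_eq_one (p : PMF α) : ∑ a, (p a).toReal = 1 := by
  rw [← ENNReal.toReal_sum fun a _ => p.apply_ne_top a, ← tsum_fintype (L := .unconditional _),
    p.tsum_coe, ENNReal.toReal_one]

lemma pexp_add_const (p : PMF α) (f : α → ℝ) (c : ℝ) :
    pexp p (fun a => f a + c) = pexp p f + c := by
  simp only [pexp, mul_add, Finset.sum_add_distrib, ← Finset.sum_mul, p.sum_toReal_eq_one, one_mul]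

lemma pexp_const (p : PMF α) (c : ℝ) : pexp p (fun _ => c) = c := by
  simpa [pexp] using pexp_add_const p 0 c

end Pexp

section LossFrom

variable {𝓧 𝓨 𝓨h : Type*} [Fintype 𝓧] [Fintype 𝓨]
  (κ : ℕ → 𝓧 → 𝓨h → PMF 𝓧) (ν : ℕ → 𝓧 → PMF 𝓨)

def twoRoundLoss (ℓ : 𝓧 → 𝓨 → 𝓨h → ℝ) (j : ℕ) (φ : 𝓧 → 𝓨h) (x : 𝓧) (yh : 𝓨h) : ℝ :=
  lbar ν ℓ j x yh + pexp (κ (j + 1) x yh) fun x' => lbar ν ℓ (j + 1) x' (φ x')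

lemma lossFrom_two_eq_twoRoundLoss (ℓ : 𝓧 → 𝓨 → 𝓨h → ℝ) (ψ : Strategy 𝓧 𝓨 𝓨h) (j : ℕ)
    (φ : 𝓧 → 𝓨h) (hψ : ∀ x hx hy, ψ (j + 1) x hx hy = φ x) (x : 𝓧) (hx : List 𝓧)
    (hy : List 𝓨) :
    lossFrom κ ν (fun _ => ℓ) ψ j 2 x hx hy = twoRoundLoss κ ν ℓ j φ x (ψ j x hx hy) := by
  simp only [lossFrom, hψ, pexp_const, add_zero, pexp_add_const, twoRoundLoss, lbar]

lemma lossFrom_le_of_eq_before (L : ℕ → 𝓧 → 𝓨 → 𝓨h → ℝ) {ψ ψ' : Strategy 𝓧 𝓨 𝓨h}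
    (j k m : ℕ) (heq : ∀ r < k, ψ' (j + r) = ψ (j + r))
    (hle : ∀ x hx hy, lossFrom κ ν L ψ' (j + k) m x hx hy ≤ lossFrom κ ν L ψ (j + k) m x hx hy)
    (x : 𝓧) (hx : List 𝓧) (hy : List 𝓨) :
    lossFrom κ ν L ψ' j (k + m) x hx hy ≤ lossFrom κ ν L ψ j (k + m) x hx hy := by
  induction k generalizing j x hx hy with
  | zero => simpa using hle x hx hy
  | succ k ih =>
    have hj : ψ' j = ψ j := by simpa using heq 0 k.succ_pos
    have htail := ih (j + 1)
      (fun r hr => by simpa only [add_right_comm j 1 r, add_assoc] using heq (r + 1) (by omega))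
      (by simpa only [add_right_comm j 1 k, add_assoc] using hle)
    rw [Nat.succ_add, lossFrom, lossFrom, hj]
    exact pexp_mono _ fun y => add_le_add_right (pexp_mono _ fun x' => htail _ _ _) _

end LossFrom

lemma exists_forall_apply_le {α β γ : Type*} [Finite β] [Nonempty β] [LinearOrder γ]
    (f : α → β → γ) :
    ∃ g : α → β, ∀ a b, f a (g a) ≤ f a b :=
  ⟨fun a => (Finite.exists_min (f a)).choose, fun a => (Finite.exists_min (f a)).choose_spec⟩

theorem penultimate_round_lemma_general {𝓧 𝓨 𝓨h : Type*} [Fintype 𝓧] [Fintype 𝓨]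
    [Fintype 𝓨h] [Nonempty 𝓨h]
    (P₁ : PMF 𝓧) (κ : ℕ → 𝓧 → 𝓨h → PMF 𝓧) (ν : ℕ → 𝓧 → PMF 𝓨)
    (ℓ : 𝓧 → 𝓨 → 𝓨h → ℝ) (i : ℕ) (hi : 2 ≤ i) (ψ : Strategy 𝓧 𝓨 𝓨h) (ψbarᵢ : 𝓧 → 𝓨h) :
    ∃ ψbar : 𝓧 → 𝓨h,
      J P₁ κ ν ℓ i
          (replaceRound (replaceRound ψ i (fun _ x _ _ => ψbarᵢ x)) (i - 1)
            (fun _ x _ _ => ψbar x)) ≤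
        J P₁ κ ν ℓ i (replaceRound ψ i (fun _ x _ _ => ψbarᵢ x)) := by
  obtain ⟨k, rfl⟩ : ∃ k, i = k + 2 := ⟨i - 2, by omega⟩
  simp only [show k + 2 - 1 = 1 + k by omega]
  obtain ⟨ψbar, hmin⟩ := exists_forall_apply_le (twoRoundLoss κ ν ℓ (1 + k) ψbarᵢ)
  refine ⟨ψbar, pexp_mono _ fun x => ?_⟩
  set ψ₂ := replaceRound ψ (k + 2) fun _ x _ _ => ψbarᵢ x
  have hlast₂ : ∀ x hx hy, ψ₂ (1 + k + 1) x hx hy = ψbarᵢ x := fun x hx hy => by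
    simp [ψ₂, replaceRound, show 1 + k + 1 = k + 2 by omega]
  have hlast₃ : ∀ x hx hy, replaceRound ψ₂ (1 + k) (fun _ x _ _ => ψbar x) (1 + k + 1) x hx hy =
      ψbarᵢ x := fun x hx hy => by simp [replaceRound, hlast₂]
  refine lossFrom_le_of_eq_before κ ν _ 1 k 2 (fun r hr => ?_) (fun x hx hy => ?_) x [] []
  · funext x hx hy
    simp only [replaceRound, if_neg (show 1 + r ≠ 1 + k by omega)]
  · rw [lossFrom_two_eq_twoRoundLoss κ ν ℓ _ _ ψbarᵢ hlast₂,
      lossFrom_two_eq_twoRoundLoss κ ν ℓ _ _ ψbarᵢ hlast₃]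
    simpa [replaceRound] using hmin x _

/-- **Lemma 4, (i−1)th-round lemma.** Fix `i ≥ 2` and an `i`-round dynamic
inference model. For any estimation strategy whose last (round-`i`) estimator is the Markov
estimator `ψbarᵢ : 𝓧 → 𝓨h` (and whose earlier estimators are those of an arbitrary
history-dependent strategy `ψ`), there is a Markov estimator `ψ̄ᵢ₋₁ : 𝓧 → 𝓨h` such that also
replacing the round-`(i−1)` estimator by it does not increase the inference loss. -/
theorem penultimate_round_lemma {𝓧 𝓨 𝓨h : Type*} [Fintype 𝓧] [Nonempty 𝓧] [Fintype 𝓨] [Nonempty 𝓨]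
    [Fintype 𝓨h] [Nonempty 𝓨h]
    (P₁ : PMF 𝓧) (κ : ℕ → 𝓧 → 𝓨h → PMF 𝓧) (ν : ℕ → 𝓧 → PMF 𝓨)
    (ℓ : 𝓧 → 𝓨 → 𝓨h → ℝ) (i : ℕ) (hi : 2 ≤ i) (ψ : Strategy 𝓧 𝓨 𝓨h) (ψbarᵢ : 𝓧 → 𝓨h) :
    ∃ ψbar : 𝓧 → 𝓨h,
      J P₁ κ ν ℓ i
          (replaceRound (replaceRound ψ i (fun _ x _ _ => ψbarᵢ x)) (i - 1)
            (fun _ x _ _ => ψbar x)) ≤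
        J P₁ κ ν ℓ i (replaceRound ψ i (fun _ x _ _ => ψbarᵢ x)) :=
  penultimate_round_lemma_general P₁ κ ν ℓ i hi ψ ψbarᵢ

end
end
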